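/- Let Y = {0,1}^ℕ with the ultrametric d(x,y) = e^{-k} for x ≠ y, where k = min{i : x_i ≠ y_i}, and d(x,x) = 0. For x ∈ Y let x̄ denote the coordinatewise complement, and define α_x : Y → Y by α_x(x) = x̄ and, for y ≠ x with n = min{i : x_i ≠ y_i}, (α_x(y))_i = 1 − y_i for i ≤ n and (α_x(y))_i = y_i for i > n. Let Γ be the subgroup of the group of bijections of Y generated by {α_x : x ∈ Y}. Then Γ acts locally rigidly on Y: for every x ∈ Y and every γ ∈ Γ with γ(x) = x, there exists ε > 0 such that γ(y) = y for all y ∈ B(x,ε). -/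

import Mathlib

/-!
View `Y = {0,1}^ℕ` as the group `(ℤ/2)^ℕ`, so that `x̄ = x + 1`. Every `γ ∈ Γ` has, near each
point `x`, one of two germs: a translation `y ↦ y + c`, or `y ↦ α_x(y) + c`, with `c` finitely
supported. A generator `α_{x₀}` has the first kind of germ away from `x₀`, where it adds the
indicator of `[0, firstDiff x₀ x]`, and both kinds are preserved under composition and inversion
by the identities `α_{x+c}(y+c) = α_x(y) + c` and `α_{x̄} ∘ α_x = id`. At a fixed point the second
kind would force `c = 1`, so `γ` is a translation fixing `x`, i.e. the identity near `x`.
-/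

open Classical in
/-- The standard ultrametric on spaces of sequences: `d(x,y) = e^{-k}` where `k` is the
first coordinate at which `x` and `y` differ, and `d(x,x) = 0`. -/
noncomputable def seqDist {α : Type*} (x y : ℕ → α) : ℝ :=
  if h : x = y then 0 else Real.exp (-(Nat.find (Function.ne_iff.mp h) : ℝ))

/-- The coordinatewise complement of a sequence of `0`s and `1`s. -/
def compSeq (x : ℕ → Fin 2) : ℕ → Fin 2 := fun i => 1 - x i

open Classical in
/-- The map `α_x : Y → Y` on `Y = {0,1}^ℕ`: it sends `x` to its complement `x̄`, and for
`y ≠ x`, letting `n` be the first coordinate at which `x` and `y` differ, it complements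
the coordinates `y_i` for `i ≤ n` and leaves the coordinates `y_i` for `i > n` unchanged. -/
noncomputable def alphaMap (x : ℕ → Fin 2) : (ℕ → Fin 2) → (ℕ → Fin 2) := fun y =>
  if h : y = x then compSeq x
  else fun i =>
    if i ≤ Nat.find (Function.ne_iff.mp (show x ≠ y from fun e => h e.symm)) then
      1 - y i
    else y i

open Filter Topology PiNat Set

section Cylinders

variable {E : ℕ → Type*}

theorem PiNat.firstDiff_eq_of_apply_ne {x y : ∀ n, E n} {n : ℕ} (hn : x n ≠ y n)
    (hlt : ∀ i < n, x i = y i) : firstDiff x y = n := by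
  have hxy : x ≠ y := fun h => hn (congrFun h n)
  refine le_antisymm (not_lt.1 fun h => hn (apply_eq_of_lt_firstDiff h)) ?_
  exact (mem_cylinder_iff_le_firstDiff hxy n).1 hlt

theorem PiNat.nhds_hasBasis_cylinder [∀ n, TopologicalSpace (E n)] [∀ n, DiscreteTopology (E n)]
    (x : ∀ n, E n) : (𝓝 x).HasBasis (fun _ => True) (cylinder x) := by
  refine ⟨fun s => ?_⟩
  rw [(isTopologicalBasis_cylinders E).mem_nhds_iff]
  constructor
  · rintro ⟨_, ⟨z, n, rfl⟩, hx, hs⟩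
    exact ⟨n, trivial, mem_cylinder_iff_eq.1 hx ▸ hs⟩
  · rintro ⟨n, -, hs⟩
    exact ⟨_, ⟨x, n, rfl⟩, self_mem_cylinder x n, hs⟩

end Cylinders

theorem seqDist_of_ne {α : Type*} {x y : ℕ → α} (h : x ≠ y) :
    seqDist x y = Real.exp (-(firstDiff x y : ℝ)) := by
  rw [seqDist, dif_neg h, firstDiff_def, dif_pos h]

theorem exists_seqDist_lt_subset {α : Type*} [TopologicalSpace α] [DiscreteTopology α]
    {x : ℕ → α} {s : Set (ℕ → α)} (hs : s ∈ 𝓝 x) :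
    ∃ ε > 0, ∀ y, seqDist x y < ε → y ∈ s := by
  obtain ⟨n, -, hn⟩ := (nhds_hasBasis_cylinder x).mem_iff.1 hs
  refine ⟨Real.exp (-(n : ℝ)), Real.exp_pos _, fun y hy => hn ?_⟩
  obtain rfl | hxy := eq_or_ne x y
  · exact self_mem_cylinder x n
  rw [seqDist_of_ne hxy, Real.exp_lt_exp, neg_lt_neg_iff, Nat.cast_lt] at hy
  exact (mem_cylinder_comm x y n).2 ((mem_cylinder_iff_le_firstDiff hxy n).2 hy.le)

theorem fin_two_one_sub_eq_add_one (a : Fin 2) : 1 - a = a + 1 := by decide +revert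

theorem fin_two_add_self (a : Fin 2) : a + a = 0 := by decide +revert

theorem add_add_cancel_right_of_fin_two (y c : ℕ → Fin 2) : y + c + c = y := by
  funext i
  simp only [Pi.add_apply, add_assoc, fin_two_add_self, add_zero]

theorem compSeq_eq_add_one (x : ℕ → Fin 2) : compSeq x = x + 1 :=
  funext fun i => fin_two_one_sub_eq_add_one (x i)

theorem alphaMap_self (x : ℕ → Fin 2) : alphaMap x x = x + 1 := by
  rw [alphaMap, dif_pos rfl, compSeq_eq_add_one]

theorem alphaMap_of_ne {x y : ℕ → Fin 2} (h : y ≠ x) :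
    alphaMap x y = y + (Iic (firstDiff x y)).indicator 1 := by
  have hfd : firstDiff x y = Nat.find (Function.ne_iff.mp (Ne.symm h)) := by
    rw [firstDiff_def, dif_pos (Ne.symm h)]
    -- the two `Nat.find`s differ only in their decidability instances
    congr
  funext i
  rw [alphaMap, dif_neg h, hfd]
  by_cases hi : i ≤ Nat.find (Function.ne_iff.mp (Ne.symm h)) <;>
    simp only [hi, if_true, if_false, Pi.add_apply, indicator_apply, mem_Iic, Pi.one_apply,
      fin_two_one_sub_eq_add_one, add_zero]

theorem alphaMap_add_right (x y c : ℕ → Fin 2) :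
    alphaMap (x + c) (y + c) = alphaMap x y + c := by
  obtain rfl | h := eq_or_ne y x
  · rw [alphaMap_self, alphaMap_self, add_right_comm]
  have hc : y + c ≠ x + c := fun e => h (add_right_cancel e)
  have hfd : firstDiff (x + c) (y + c) = firstDiff x y :=
    firstDiff_eq_of_apply_ne
      (by simpa using apply_firstDiff_ne (Ne.symm h))
      fun i hi => by simp [apply_eq_of_lt_firstDiff hi]
  rw [alphaMap_of_ne h, alphaMap_of_ne hc, hfd, add_right_comm]

theorem alphaMap_add_one_alphaMap (x y : ℕ → Fin 2) : alphaMap (x + 1) (alphaMap x y) = y := by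
  obtain rfl | h := eq_or_ne y x
  · rw [alphaMap_self, alphaMap_self, add_add_cancel_right_of_fin_two]
  set n := firstDiff x y
  have hn : (x + 1) n ≠ (y + (Iic n).indicator 1 : ℕ → Fin 2) n := by
    simpa using apply_firstDiff_ne (Ne.symm h)
  have hfd : firstDiff (x + 1) (y + (Iic n).indicator 1) = n :=
    firstDiff_eq_of_apply_ne hn fun i hi => by simp [hi.le, apply_eq_of_lt_firstDiff hi]
  have hne : y + (Iic n).indicator 1 ≠ x + 1 := fun e => hn (by rw [e])
  rw [alphaMap_of_ne h, alphaMap_of_ne hne, hfd, add_add_cancel_right_of_fin_two]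

theorem continuousAt_alphaMap_self (x : ℕ → Fin 2) : ContinuousAt (alphaMap x) x := by
  refine ((nhds_hasBasis_cylinder x).tendsto_iff (nhds_hasBasis_cylinder _)).2
    fun n _ => ⟨n, trivial, fun y hy => ?_⟩
  obtain rfl | h := eq_or_ne y x
  · exact self_mem_cylinder _ n
  have hn : n ≤ firstDiff x y := (mem_cylinder_iff_le_firstDiff (Ne.symm h) n).1
    ((mem_cylinder_comm x y n).1 hy)
  intro i hi
  simp [alphaMap_of_ne h, alphaMap_self, (hi.trans_le hn).le, hy i hi]

theorem alphaMap_eventuallyEq_add_of_ne {x x₀ : ℕ → Fin 2} (h : x ≠ x₀) :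
    alphaMap x₀ =ᶠ[𝓝 x] (· + (Iic (firstDiff x₀ x)).indicator 1) := by
  filter_upwards [(nhds_hasBasis_cylinder x).mem_of_mem (i := firstDiff x₀ x + 1) trivial]
    with y hy
  have hfd : firstDiff x₀ y = firstDiff x₀ x := by
    refine firstDiff_eq_of_apply_ne ?_ fun i hi => ?_
    · rw [hy _ (Nat.lt_succ_self _)]
      exact apply_firstDiff_ne (Ne.symm h)
    · rw [hy i (hi.trans (Nat.lt_succ_self _))]
      exact apply_eq_of_lt_firstDiff hi
  have hne : y ≠ x₀ := fun e => by
    rw [e] at hy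
    exact apply_firstDiff_ne (Ne.symm h) (hy _ (Nat.lt_succ_self _))
  rw [alphaMap_of_ne hne, hfd]

/-- Finite support of `c` is what excludes the second alternative at a fixed point `x`,
where it would force `c = 1`. -/
def HasTameGermAt (γ : Equiv.Perm (ℕ → Fin 2)) (x : ℕ → Fin 2) : Prop :=
  ∃ c : ℕ → Fin 2, (Function.support c).Finite ∧
    (⇑γ =ᶠ[𝓝 x] (· + c) ∨ ⇑γ =ᶠ[𝓝 x] fun y => alphaMap x y + c)

theorem Equiv.Perm.inv_eventuallyEq_of_leftInverse {X : Type*} [TopologicalSpace X]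
    {γ : Equiv.Perm X} {f g : X → X} {x x' : X} (hγ : ⇑γ =ᶠ[𝓝 x'] f) (hg : ContinuousAt g x)
    (hgx : g x = x') (hfg : Function.LeftInverse f g) : ⇑γ⁻¹ =ᶠ[𝓝 x] g := by
  subst hgx
  filter_upwards [hg.tendsto.eventually hγ] with y hy
  exact Equiv.Perm.inv_eq_iff_eq.2 (hy.trans (hfg y)).symm

namespace HasTameGermAt

variable {γ γ₁ γ₂ : Equiv.Perm (ℕ → Fin 2)} {x : ℕ → Fin 2}

theorem of_eq_alphaMap {x₀ : ℕ → Fin 2} (hγ : ⇑γ = alphaMap x₀) (x : ℕ → Fin 2) :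
    HasTameGermAt γ x := by
  obtain rfl | h := eq_or_ne x x₀
  · exact ⟨0, by simp, Or.inr (by simp [hγ])⟩
  · exact ⟨_, (finite_Iic _).subset support_indicator_subset,
      Or.inl (hγ ▸ alphaMap_eventuallyEq_add_of_ne h)⟩

theorem one (x : ℕ → Fin 2) : HasTameGermAt 1 x :=
  ⟨0, by simp, Or.inl (.of_eq (funext fun y => (add_zero y).symm))⟩

theorem continuousAt (h : HasTameGermAt γ x) : ContinuousAt γ x := by
  obtain ⟨c, -, h | h⟩ := h
  · exact (continuous_add_const c).continuousAt.congr h.symm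
  · exact ((continuousAt_alphaMap_self x).add continuousAt_const).congr h.symm

theorem mul (h₁ : HasTameGermAt γ₁ (γ₂ x)) (h₂ : HasTameGermAt γ₂ x) :
    HasTameGermAt (γ₁ * γ₂) x := by
  have ht := h₂.continuousAt.tendsto
  obtain ⟨c₁, hc₁, h₁⟩ := h₁
  obtain ⟨c₂, hc₂, h₂⟩ := h₂
  refine ⟨c₂ + c₁, (hc₂.union hc₁).subset (Function.support_add _ _), ?_⟩
  rcases h₂ with h₂ | h₂ <;> have hx := h₂.eq_of_nhds <;> rcases h₁ with h₁ | h₁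
  · refine Or.inl ?_
    filter_upwards [h₁.comp_tendsto ht, h₂] with y hy₁ hy₂
    calc (γ₁ * γ₂) y = γ₂ y + c₁ := hy₁
      _ = y + (c₂ + c₁) := by rw [hy₂, add_assoc]
  · refine Or.inr ?_
    filter_upwards [h₁.comp_tendsto ht, h₂] with y hy₁ hy₂
    calc (γ₁ * γ₂) y = alphaMap (γ₂ x) (γ₂ y) + c₁ := hy₁
      _ = alphaMap x y + (c₂ + c₁) := by rw [hx, hy₂, alphaMap_add_right, add_assoc]
  · refine Or.inr ?_
    filter_upwards [h₁.comp_tendsto ht, h₂] with y hy₁ hy₂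
    calc (γ₁ * γ₂) y = γ₂ y + c₁ := hy₁
      _ = alphaMap x y + (c₂ + c₁) := by rw [hy₂, add_assoc]
  · refine Or.inl ?_
    filter_upwards [h₁.comp_tendsto ht, h₂] with y hy₁ hy₂
    calc (γ₁ * γ₂) y = alphaMap (γ₂ x) (γ₂ y) + c₁ := hy₁
      _ = y + (c₂ + c₁) := by
        rw [hx, hy₂, alphaMap_self, alphaMap_add_right, alphaMap_add_one_alphaMap, add_assoc]

theorem inv {x' : ℕ → Fin 2} (h : HasTameGermAt γ x') (hx : γ x' = x) :
    HasTameGermAt γ⁻¹ x := by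
  subst hx
  obtain ⟨c, hc, h | h⟩ := h
  · have hx : γ x' + c = x' := by rw [h.eq_of_nhds, add_add_cancel_right_of_fin_two]
    refine ⟨c, hc, Or.inl ?_⟩
    exact Equiv.Perm.inv_eventuallyEq_of_leftInverse h (continuous_add_const c).continuousAt hx
      fun y => add_add_cancel_right_of_fin_two y c
  · have hx : γ x' + 1 + c = x' := by
      rw [h.eq_of_nhds, alphaMap_self, add_assoc _ 1 c, add_assoc x' 1 c,
        add_add_cancel_right_of_fin_two]
    refine ⟨c, hc, Or.inr ?_⟩
    refine Equiv.Perm.inv_eventuallyEq_of_leftInverse h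
      ((continuousAt_alphaMap_self _).add continuousAt_const) (by rw [alphaMap_self, hx])
      fun y => ?_
    calc alphaMap x' (alphaMap (γ x') y + c) + c
        = alphaMap (γ x' + 1 + c) (alphaMap (γ x') y + c) + c := by rw [hx]
      _ = y := by
        rw [alphaMap_add_right, alphaMap_add_one_alphaMap, add_add_cancel_right_of_fin_two]

theorem eventually_apply_eq (h : HasTameGermAt γ x) (hx : γ x = x) : ∀ᶠ y in 𝓝 x, γ y = y := by
  obtain ⟨c, hc, h | h⟩ := h
  · have hc0 : c = 0 := add_eq_left.1 (h.eq_of_nhds.symm.trans hx)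
    filter_upwards [h] with y hy
    rw [hy, hc0, add_zero]
  · obtain ⟨i, hi⟩ := hc.exists_notMem
    have hxi : x i + 1 + c i = x i := by
      simpa [alphaMap_self] using congrFun (h.eq_of_nhds.symm.trans hx) i
    rw [Function.notMem_support.1 hi, add_zero, add_eq_left] at hxi
    exact absurd hxi (by decide)

end HasTameGermAt

def tameSubgroup : Subgroup (Equiv.Perm (ℕ → Fin 2)) where
  carrier := {γ | ∀ x, HasTameGermAt γ x}
  mul_mem' h₁ h₂ x := (h₁ _).mul (h₂ x)
  one_mem' := HasTameGermAt.one
  inv_mem' h x := (h _).inv (Equiv.apply_symm_apply _ x)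

/-- The subgroup `Γ` of the group of bijections of `Y = {0,1}^ℕ` generated by the maps
`α_x` acts locally rigidly on `Y`: every `γ ∈ Γ` fixing a point `x` is the identity
on a ball around `x`. -/
theorem alpha_closure_acts_locally_rigidly
    (γ : Equiv.Perm (ℕ → Fin 2))
    (hγ : γ ∈ Subgroup.closure
      {g : Equiv.Perm (ℕ → Fin 2) | ∃ x : ℕ → Fin 2, ∀ y : ℕ → Fin 2, g y = alphaMap x y})
    (x : ℕ → Fin 2) (hx : γ x = x) :
    ∃ ε > 0, ∀ y : ℕ → Fin 2, seqDist x y < ε → γ y = y := by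
  have hγ' : γ ∈ tameSubgroup := by
    refine (Subgroup.closure_le _).2 ?_ hγ
    rintro g ⟨x₀, hg⟩
    exact HasTameGermAt.of_eq_alphaMap (funext hg)
  exact exists_seqDist_lt_subset ((hγ' x).eventually_apply_eq hx)
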